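/- Let $B$ be an algebra over a field $k$, $C$ a finite-dimensional coalgebra, and suppose $A$ is an $H$-module algebra with $C$ a finite-dimensional subcoalgebra of the Hopf algebra $H$. Let $\theta: A \to [C^{\mathrm{cop}}, A]$ be the algebra homomorphism $\theta_a(c) = S(c)a$. Then the convolution algebra $[C^{\mathrm{cop}}, A]$ equals $\theta(A)\, C^*$, where $C^* \subseteq \operatorname{Hom}_k(C, A)$ is the space of scalar-valued functionals; in particular $[C^{\mathrm{cop}}, A]$ is a finitely generated left $\theta(A)$-module. -/

import Mathlib

open TensorProduct

/-- The `k`-linear map `h ↦ h • a` associated to a linear action of `H` on `A`. -/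
def actL (k H A : Type*) [CommSemiring k] [Semiring H] [Module k H]
    [AddCommMonoid A] [Module k A] [Module H A] [IsScalarTower k H A] (a : A) :
    H →ₗ[k] A where
  toFun h := h • a
  map_add' h h' := add_smul h h' a
  map_smul' c h := by simp [smul_assoc]

/-- The algebra homomorphism `θ : A → [C^cop, A]`, `θ_a(c) = S(c) • a`. -/
noncomputable def thetaMap {k H A : Type*} [Field k] [Ring H] [HopfAlgebra k H]
    [Ring A] [Algebra k A] [Module H A] [IsScalarTower k H A]
    (C : Submodule k H) (a : A) : C →ₗ[k] A :=
  actL k H A a ∘ₗ HopfAlgebra.antipode (R := k) ∘ₗ C.subtype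

/-- Convolution on `Hom_k(C, A)` with respect to the opposite comultiplication of the
subcoalgebra `C`: `(ξ × η)(c) = ∑ ξ(c₂) η(c₁)`. -/
noncomputable def convCop {k A : Type*} [Field k] [Ring A] [Algebra k A]
    {C : Type*} [AddCommGroup C] [Module k C]
    (comulC : C →ₗ[k] C ⊗[k] C) (ξ η : C →ₗ[k] A) : C →ₗ[k] A :=
  LinearMap.mul' k A ∘ₗ TensorProduct.map ξ η ∘ₗ
    (TensorProduct.comm k C C).toLinearMap ∘ₗ comulC

/-- The embedding of scalar-valued functionals `C* ⊆ Hom_k(C, A)`. -/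
noncomputable def embDual {k A : Type*} [Field k] [Ring A] [Algebra k A]
    {C : Type*} [AddCommGroup C] [Module k C] (ξ : C →ₗ[k] k) : C →ₗ[k] A :=
  (Algebra.linearMap k A) ∘ₗ ξ

/-! Choose a basis `b` of `C` and write `Δ b_q = ∑_p b_p ⊗ u_pq`. The `u_pq` form a comatrix, so
`∑_p S(u_rp) u_pq = δ_rq`, and applying the anti-multiplicative `S` gives
`∑_p S(u_pq) S²(u_rp) = δ_rq`. Since `(θ_a × b_p^*)(b_q) = S(u_pq) a`, every `f` equals
`∑_p θ_{a_p} × b_p^*` with `a_p = ∑_s S²(u_sp) f(b_s)`: this is `f = Ψ(Ψ⁻¹ f)` written in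
coordinates. -/

open Coalgebra HopfAlgebra

lemma TensorProduct.exists_eq_sum_basis_tmul {R M N ι : Type*} [CommSemiring R]
    [AddCommMonoid M] [Module R M] [AddCommMonoid N] [Module R N] [Fintype ι]
    (b : Module.Basis ι R M) (x : M ⊗[R] N) : ∃ n : ι → N, x = ∑ i, b i ⊗ₜ[R] n i := by
  obtain ⟨c, rfl⟩ := TensorProduct.eq_repr_basis_left b x
  exact ⟨c, Finsupp.sum_fintype _ _ fun i => TensorProduct.tmul_zero _ _⟩

lemma LinearIndependent.sum_tmul_injective {K V N ι : Type*} [Field K] [AddCommGroup V]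
    [Module K V] [AddCommGroup N] [Module K N] [Fintype ι] {v : ι → V}
    (hv : LinearIndependent K v) : Function.Injective fun x : ι → N => ∑ i, v i ⊗ₜ[K] x i := by
  classical
  let W := Submodule.span K (Set.range v)
  obtain ⟨π, hπ⟩ := W.subtype.exists_leftInverse_of_injective W.ker_subtype
  let b := Module.Basis.span hv
  have hcoord : ∀ i j, (b.coord i ∘ₗ π) (v j) = if j = i then 1 else 0 := by
    intro i j
    have hvj : v j = W.subtype (b j) := by rw [Submodule.subtype_apply, Module.Basis.span_apply]
    rw [LinearMap.comp_apply, hvj, ← LinearMap.comp_apply π, hπ, LinearMap.id_apply,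
      Module.Basis.coord_apply, Module.Basis.repr_self, Finsupp.single_apply]
  intro x y hxy
  funext i
  have := congrArg (fun t => TensorProduct.lid K N ((b.coord i ∘ₗ π).rTensor N t)) hxy
  simpa [hcoord] using this

structure IsComatrix (K : Type*) {H ι : Type*} [CommSemiring K] [AddCommMonoid H] [Module K H]
    [Coalgebra K H] [Fintype ι] [DecidableEq ι] (u : ι → ι → H) : Prop where
  comul_eq : ∀ p q, comul (R := K) (u p q) = ∑ r, u p r ⊗ₜ[K] u r q
  counit_eq : ∀ p q, counit (R := K) (u p q) = if p = q then 1 else 0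

section Comatrix

variable {K H ι : Type*} [Fintype ι] [DecidableEq ι]

theorem isComatrix_of_comul_eq_sum [Field K] [AddCommGroup H] [Module K H] [Coalgebra K H]
    {b : ι → H} (hb : LinearIndependent K b) {u : ι → ι → H}
    (hbu : ∀ q, comul (R := K) (b q) = ∑ p, b p ⊗ₜ[K] u p q) : IsComatrix K u where
  comul_eq r q := by
    have hcoassoc := coassoc_apply (R := K) (b q)
    simp only [hbu, map_sum, LinearMap.rTensor_tmul, LinearMap.lTensor_tmul,
      TensorProduct.sum_tmul, TensorProduct.assoc_tmul] at hcoassoc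
    rw [Finset.sum_comm] at hcoassoc
    simp only [← TensorProduct.tmul_sum] at hcoassoc
    exact congrFun (hb.sum_tmul_injective hcoassoc.symm) r
  counit_eq p q := by
    have hcounit := lTensor_counit_comul (R := K) (b q)
    rw [hbu, map_sum] at hcounit
    simp only [LinearMap.lTensor_tmul] at hcounit
    refine congrFun (hb.sum_tmul_injective (a₂ := fun p => if p = q then 1 else 0)
      (hcounit.trans ?_)) p
    simp [TensorProduct.tmul_ite]

variable [CommSemiring K] [Semiring H] [HopfAlgebra K H] {u : ι → ι → H}

theorem IsComatrix.sum_antipode_mul (hu : IsComatrix K u) (r q : ι) :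
    ∑ p, antipode K (u r p) * u p q = if r = q then 1 else 0 := by
  have h := mul_antipode_rTensor_comul_apply (R := K) (u r q)
  simp only [hu.comul_eq, hu.counit_eq, map_sum, LinearMap.rTensor_tmul,
    LinearMap.mul'_apply] at h
  rw [h]
  split_ifs <;> simp

theorem IsComatrix.sum_antipode_mul_antipode_antipode (hu : IsComatrix K u) (r q : ι) :
    ∑ p, antipode K (u p q) * antipode K (antipode K (u r p)) = if r = q then 1 else 0 := by
  simp_rw [← antipode_mul_antidistrib, ← map_sum, hu.sum_antipode_mul]
  split_ifs <;> simp

end Comatrix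

@[simp]
lemma thetaMap_apply {k H A : Type*} [Field k] [Ring H] [HopfAlgebra k H]
    [Ring A] [Algebra k A] [Module H A] [IsScalarTower k H A]
    (C : Submodule k H) (a : A) (c : C) : thetaMap C a c = antipode k (c : H) • a :=
  rfl

lemma convCop_embDual_coord_apply {k A C ι : Type*} [Field k] [Ring A] [Algebra k A]
    [AddCommGroup C] [Module k C] [Fintype ι] (b : Module.Basis ι k C)
    {comulC : C →ₗ[k] C ⊗[k] C} {v : ι → ι → C}
    (hv : ∀ q, comulC (b q) = ∑ p, b p ⊗ₜ[k] v p q) (ξ : C →ₗ[k] A) (p q : ι) :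
    convCop comulC ξ (embDual (b.coord p)) (b q) = ξ (v p q) := by
  classical
  simp [convCop, embDual, hv, Finsupp.single_apply]

theorem convolution_algebra_eq_theta_mul_dual_general
    {k H A : Type*} [Field k] [Ring H] [HopfAlgebra k H]
    [Ring A] [Algebra k A] [Module H A] [IsScalarTower k H A]
    (C : Submodule k H) [FiniteDimensional k C]
    (comulC : C →ₗ[k] C ⊗[k] C)
    (hcomulC : (TensorProduct.map C.subtype C.subtype) ∘ₗ comulC =
      Coalgebra.comul (R := k) ∘ₗ C.subtype) :
    ∀ f : C →ₗ[k] A, ∃ (n : ℕ) (a : Fin n → A) (ξ : Fin n → (C →ₗ[k] k)),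
      f = ∑ i : Fin n, convCop comulC (thetaMap C (a i)) (embDual (ξ i)) := by
  intro f
  let b := Module.finBasis k C
  choose w hw using fun q => TensorProduct.exists_eq_sum_basis_tmul b (comulC (b q))
  obtain ⟨v, hv⟩ : ∃ v : _ → _ → C, ∀ q, comulC (b q) = ∑ p, b p ⊗ₜ[k] v p q :=
    ⟨fun p q => w q p, hw⟩
  have hu : IsComatrix k fun p q => (v p q : H) := by
    refine isComatrix_of_comul_eq_sum (b.linearIndependent.map' C.subtype C.ker_subtype)
      fun q => ?_
    have h := LinearMap.congr_fun hcomulC (b q)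
    simp only [LinearMap.comp_apply, hv, map_sum, TensorProduct.map_tmul] at h
    simpa using h.symm
  refine ⟨_, fun p => ∑ s, antipode k (antipode k (v s p : H)) • f (b s), b.coord,
    b.ext fun q => ?_⟩
  simp only [LinearMap.sum_apply, convCop_embDual_coord_apply b hv, thetaMap_apply]
  calc f (b q)
      = ∑ s, (∑ p, antipode k (v p q : H) * antipode k (antipode k (v s p : H))) • f (b s) := by
        simp [hu.sum_antipode_mul_antipode_antipode]
    _ = ∑ p, antipode k (v p q : H) • ∑ s, antipode k (antipode k (v s p : H)) • f (b s) := by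
        simp only [Finset.sum_smul, Finset.smul_sum, mul_smul]
        exact Finset.sum_comm

/-- For a finite-dimensional subcoalgebra `C` of `H` and an `H`-module algebra `A`, the
convolution algebra `[C^cop, A]` equals `θ(A) C*`; in particular it is a finitely
generated left `θ(A)`-module. -/
theorem convolution_algebra_eq_theta_mul_dual
    {k H A : Type*} [Field k] [Ring H] [HopfAlgebra k H]
    [Ring A] [Algebra k A] [Module H A] [IsScalarTower k H A]
    (hmul : ∀ (h : H) (a b : A), h • (a * b) =
      LinearMap.mul' k A (TensorProduct.map (actL k H A a) (actL k H A b)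
        (Coalgebra.comul (R := k) h)))
    (hone : ∀ h : H, h • (1 : A) = Coalgebra.counit (R := k) h • (1 : A))
    (C : Submodule k H) [FiniteDimensional k C]
    (comulC : C →ₗ[k] C ⊗[k] C)
    (hcomulC : (TensorProduct.map C.subtype C.subtype) ∘ₗ comulC =
      Coalgebra.comul (R := k) ∘ₗ C.subtype) :
    ∀ f : C →ₗ[k] A, ∃ (n : ℕ) (a : Fin n → A) (ξ : Fin n → (C →ₗ[k] k)),
      f = ∑ i : Fin n, convCop comulC (thetaMap C (a i)) (embDual (ξ i)) :=
  convolution_algebra_eq_theta_mul_dual_general C comulC hcomulC
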